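/- Let α, β ∈ ℝ with −1 < α + β < 2, set e = 1/(1 + α + β) and E = (e, e, e), and consider the May–Leonard vector field b(x) = ( x₁(1 − x₁ − αx₂ − βx₃), x₂(1 − βx₁ − x₂ − αx₃), x₃(1 − αx₁ − βx₂ − x₃) ) on the open positive orthant Int ℝ₊³ = { x ∈ ℝ³ : x₁, x₂, x₃ > 0 }. Let V(x) = Σ_{i=1}^3 ( x_i − e − e·ln(x_i/e) ). Then for all x ∈ Int ℝ₊³: ⟨b(x), ∇V(x)⟩ = −Σ_{i=1}^3 (x_i − e)² − (α+β) Σ_{1≤i<j≤3} (x_i − e)(x_j − e), and there exists a constant k > 0 (depending only on α + β) such that ⟨b(x), ∇V(x)⟩ ≤ −k|x − E|² for all x ∈ Int ℝ₊³. -/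

import Mathlib

open scoped RealInnerProductSpace BigOperators

noncomputable section

/-- The May–Leonard vector field. -/
def mayLeonard (α β : ℝ) (x : EuclideanSpace ℝ (Fin 3)) : EuclideanSpace ℝ (Fin 3) :=
  WithLp.toLp 2 ![x 0 * (1 - x 0 - α * x 1 - β * x 2),
    x 1 * (1 - β * x 0 - x 1 - α * x 2),
    x 2 * (1 - α * x 0 - β * x 1 - x 2)]

/-- The Lyapunov function `V(x) = Σᵢ (xᵢ − e − e·ln(xᵢ/e))`. -/
def mlLyapunov (e : ℝ) (x : EuclideanSpace ℝ (Fin 3)) : ℝ :=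
  ∑ i : Fin 3, (x i - e - e * Real.log (x i / e))

/-- The interior equilibrium `E = (e,e,e)`. -/
def mlEquilibrium (e : ℝ) : EuclideanSpace ℝ (Fin 3) := WithLp.toLp 2 ![e, e, e]

lemma ml_grad (e : ℝ) (he : 0 < e) (x : EuclideanSpace ℝ (Fin 3)) (hx : ∀ i, 0 < x i) :
    HasGradientAt (mlLyapunov e)
      (WithLp.toLp 2 (fun i => 1 - e / x i : ∀ _ : Fin 3, ℝ) : EuclideanSpace ℝ (Fin 3)) x := by
  rw [hasGradientAt_iff_hasFDerivAt]
  have key : ∀ i : Fin 3, HasFDerivAt (fun y : EuclideanSpace ℝ (Fin 3) =>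
      y i - e - e * Real.log (y i / e))
      ((1 - e / x i) • (EuclideanSpace.proj i : EuclideanSpace ℝ (Fin 3) →L[ℝ] ℝ)) x := by
    intro i
    have hψ : HasDerivAt (fun t : ℝ => t - e - e * (Real.log t - Real.log e))
        (1 - e / x i) (x i) := by
      have := ((hasDerivAt_id (x i)).sub_const e).sub
        (((Real.hasDerivAt_log (hx i).ne').sub_const (Real.log e)).const_mul e)
      exact this.congr_deriv (by ring)
    have hφ : HasDerivAt (fun t : ℝ => t - e - e * Real.log (t / e)) (1 - e / x i) (x i) := by
      apply hψ.congr_of_eventuallyEq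
      filter_upwards [eventually_ne_nhds (hx i).ne'] with t ht
      rw [Real.log_div ht he.ne']
    have hp : HasFDerivAt (fun y : EuclideanSpace ℝ (Fin 3) => y i)
        (EuclideanSpace.proj i : EuclideanSpace ℝ (Fin 3) →L[ℝ] ℝ) x :=
      (EuclideanSpace.proj i : EuclideanSpace ℝ (Fin 3) →L[ℝ] ℝ).hasFDerivAt
    exact hφ.comp_hasFDerivAt x hp
  have hsum := HasFDerivAt.sum (fun i (_ : i ∈ Finset.univ) => key i)
  have hf : mlLyapunov e = ∑ i : Fin 3, fun y : EuclideanSpace ℝ (Fin 3) =>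
      y i - e - e * Real.log (y i / e) := by
    ext y; simp [mlLyapunov, Finset.sum_apply]
  rw [hf]
  refine hsum.congr_fderiv ?_
  ext v
  simp [PiLp.inner_apply, Fin.sum_univ_three]
  ring

/-- **Statement 15.** For `−1 < α + β < 2` and `e = 1/(1+α+β)`, on the open positive
orthant one has
`⟨b(x), ∇V(x)⟩ = −Σᵢ(xᵢ−e)² − (α+β)Σ_{i<j}(xᵢ−e)(xⱼ−e)`, and there is `k > 0` with
`⟨b(x), ∇V(x)⟩ ≤ −k|x − E|²` on the orthant. -/
theorem mayLeonard_lyapunov (α β : ℝ) (h1 : -1 < α + β) (h2 : α + β < 2)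
    (e : ℝ) (he : e = 1 / (1 + α + β)) :
    (∀ x : EuclideanSpace ℝ (Fin 3), (∀ i, 0 < x i) →
      ⟪mayLeonard α β x, gradient (mlLyapunov e) x⟫
        = -(∑ i : Fin 3, (x i - e) ^ 2)
          - (α + β) * ((x 0 - e) * (x 1 - e) + (x 0 - e) * (x 2 - e)
              + (x 1 - e) * (x 2 - e))) ∧
    (∃ k : ℝ, 0 < k ∧ ∀ x : EuclideanSpace ℝ (Fin 3), (∀ i, 0 < x i) →
      ⟪mayLeonard α β x, gradient (mlLyapunov e) x⟫
        ≤ -k * ‖x - mlEquilibrium e‖ ^ 2) := by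
  have hs : (0:ℝ) < 1 + α + β := by linarith
  have he0 : 0 < e := by rw [he]; positivity
  have h1e : e * (1 + α + β) = 1 := by rw [he]; field_simp
  have key : ∀ x : EuclideanSpace ℝ (Fin 3), (∀ i, 0 < x i) →
      ⟪mayLeonard α β x, gradient (mlLyapunov e) x⟫
        = -(∑ i : Fin 3, (x i - e) ^ 2)
          - (α + β) * ((x 0 - e) * (x 1 - e) + (x 0 - e) * (x 2 - e)
              + (x 1 - e) * (x 2 - e)) := by
    intro x hx
    rw [(ml_grad e he0 x hx).gradient]
    have h0 := (hx 0).ne'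
    have h3 := (hx 1).ne'
    have h4 := (hx 2).ne'
    simp only [mayLeonard, PiLp.inner_apply, RCLike.inner_apply, conj_trivial,
      Fin.sum_univ_three, Matrix.cons_val_zero, Matrix.cons_val_one, Matrix.head_cons,
      Matrix.cons_val_two, Matrix.tail_cons]
    field_simp
    linear_combination (3 * e - x 0 - x 1 - x 2) * h1e
  obtain ⟨k, hk0, hk1, hk2⟩ : ∃ k : ℝ, 0 < k ∧ k ≤ 1 + (α + β) ∧ k ≤ (2 - (α + β)) / 2 :=
    ⟨min (1 + (α + β)) ((2 - (α + β)) / 2), lt_min (by linarith) (by linarith),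
      min_le_left _ _, min_le_right _ _⟩
  refine ⟨key, k, hk0, ?_⟩
  intro x hx
  rw [key x hx]
  have hnorm : ‖x - mlEquilibrium e‖ ^ 2 = ∑ i : Fin 3, (x i - e) ^ 2 := by
    rw [EuclideanSpace.norm_eq, Real.sq_sqrt (by positivity)]
    simp [mlEquilibrium, Fin.sum_univ_three]
  rw [hnorm, Fin.sum_univ_three]
  have H : ∀ a b c : ℝ, -(a ^ 2 + b ^ 2 + c ^ 2) - (α + β) * (a * b + a * c + b * c)
      ≤ -k * (a ^ 2 + b ^ 2 + c ^ 2) := by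
    intro a b c
    rcases le_total (α + β) 0 with hsgn | hsgn
    · nlinarith [mul_nonneg (neg_nonneg.2 hsgn) (sq_nonneg (a - b)),
        mul_nonneg (neg_nonneg.2 hsgn) (sq_nonneg (a - c)),
        mul_nonneg (neg_nonneg.2 hsgn) (sq_nonneg (b - c)),
        sq_nonneg a, sq_nonneg b, sq_nonneg c]
    · nlinarith [mul_nonneg hsgn (sq_nonneg (a + b + c)),
        sq_nonneg a, sq_nonneg b, sq_nonneg c]
  exact H _ _ _

end
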